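/- Existence and uniqueness of the adjusted level: for every integer n ≥ 1, all r, s > 0, every α ∈ (0,1), and every α_U ∈ (α, 1) such that C(α_U, n, r, s) ≤ 1 − α, there exists a unique α' ∈ [α, α_U] with C(α', n, r, s) = 1 − α. -/

import Mathlib

/-!
Write `G_X(x) = ∫₀ˣ b(X;n,p) f(p;r,s) dp`. The Clopper–Pearson interval of `X` is the nonempty
interval `[p_L(X,α), p_U(X,α)]`, so `C(α) = ∑_X (G_X(p_U(X,α)) - G_X(p_L(X,α)))`. The endpoints are
Beta quantiles, hence continuous in `α`, with `p_L` nondecreasing and `p_U` nonincreasing; moreover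
`p_U(n,α) = 1` while `p_L(n,α)` is strictly increasing. So `C` is continuous and strictly
decreasing on `(0,1)`. Since the Beta(X, n-X+1) distribution function at `p` is `P(Bin(n,p) ≥ X)`,
the two tails missing a fixed
`p` each carry binomial mass at most `α/2`, so the coverage probability is at least `1 - α` for every
`p`, and `C(α) ≥ 1 - α`. The intermediate value theorem on `[α, α_U]` then produces `α'`, and strict
monotonicity makes it unique.
-/

open MeasureTheory

/-- The Beta function `β(r,s) = ∫₀¹ t^(r-1) (1-t)^(s-1) dt`. -/
noncomputable def betaFun (r s : ℝ) : ℝ :=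
  ∫ t in (0:ℝ)..1, t ^ (r - 1) * (1 - t) ^ (s - 1)

/-- The Beta(r,s) density `f(t;r,s) = t^(r-1)(1-t)^(s-1)/β(r,s)`. -/
noncomputable def betaPDF (r s t : ℝ) : ℝ :=
  t ^ (r - 1) * (1 - t) ^ (s - 1) / betaFun r s

/-- The Beta(r,s) cumulative distribution function `∫₀ᵖ f(t;r,s) dt`. -/
noncomputable def betaCDF (r s p : ℝ) : ℝ :=
  ∫ t in (0:ℝ)..p, betaPDF r s t

/- The Beta quantile `B(q;r,s)`: the (unique, for `r,s>0`, `q∈(0,1)`) `t ∈ (0,1)`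
with `∫₀ᵗ f(u;r,s) du = q`. -/
open Classical in
noncomputable def betaQuantile (r s q : ℝ) : ℝ :=
  if h : ∃ t, t ∈ Set.Ioo (0:ℝ) 1 ∧ betaCDF r s t = q then h.choose else 0

/-- Lower Clopper–Pearson endpoint: `p_L(X,α) = B(α/2; X, n-X+1)` for `X ≥ 1`,
and `p_L(0,α) = 0`. -/
noncomputable def cpLower (n X : ℕ) (α : ℝ) : ℝ :=
  if X = 0 then 0 else betaQuantile (X : ℝ) ((n : ℝ) - X + 1) (α / 2)

/-- Upper Clopper–Pearson endpoint: `p_U(X,α) = B(1-α/2; X+1, n-X)` for `X ≤ n-1`,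
and `p_U(n,α) = 1`. -/
noncomputable def cpUpper (n X : ℕ) (α : ℝ) : ℝ :=
  if X = n then 1 else betaQuantile ((X : ℝ) + 1) ((n : ℝ) - X) (1 - α / 2)

/-- The binomial probability `b(X;n,p) = C(n,X) p^X (1-p)^(n-X)`. -/
noncomputable def binomPMF (n X : ℕ) (p : ℝ) : ℝ :=
  (n.choose X : ℝ) * p ^ X * (1 - p) ^ (n - X)

open Classical in
/-- The mean coverage `C(α,n,r,s)` of the level-(1-α) Clopper–Pearson interval with respect
to the Beta(r,s) density. -/
noncomputable def meanCoverage (α : ℝ) (n : ℕ) (r s : ℝ) : ℝ :=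
  ∫ p in (0:ℝ)..1,
    (∑ X ∈ Finset.range (n + 1),
      (if cpLower n X α ≤ p ∧ p ≤ cpUpper n X α then binomPMF n X p else 0)) * betaPDF r s p

open Set

theorem strictMonoOn_primitive_of_pos {f : ℝ → ℝ} {a b : ℝ}
    (hf : IntervalIntegrable f volume a b) (hpos : ∀ x ∈ Ioo a b, 0 < f x) :
    StrictMonoOn (fun x => ∫ t in a..x, f t) (Icc a b) := by
  intro x hx y hy hxy
  have hint_a : ∀ {z}, z ∈ Icc a b → IntervalIntegrable f volume a z := fun hz =>
    hf.mono_set (uIcc_subset_uIcc left_mem_uIcc (Icc_subset_uIcc hz))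
  have hpos_xy : 0 < ∫ t in x..y, f t :=
    intervalIntegral.intervalIntegral_pos_of_pos_on
      (hf.mono_set (uIcc_subset_uIcc (Icc_subset_uIcc hx) (Icc_subset_uIcc hy)))
      (fun t ht => hpos t ⟨hx.1.trans_lt ht.1, ht.2.trans_le hy.2⟩) hxy
  have := intervalIntegral.integral_interval_sub_left (hint_a hy) (hint_a hx)
  dsimp only
  linarith

theorem IntervalIntegrable.indicator {E : Type*} [NormedAddCommGroup E] {μ : Measure ℝ}
    {f : ℝ → E} {a b : ℝ} {t : Set ℝ} (hf : IntervalIntegrable f μ a b) (ht : MeasurableSet t) :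
    IntervalIntegrable (t.indicator f) μ a b :=
  ⟨hf.1.indicator ht, hf.2.indicator ht⟩

theorem intervalIntegral.integral_indicator_Icc {E : Type*} [NormedAddCommGroup E]
    [NormedSpace ℝ E] {h : ℝ → E} {a b L U : ℝ} (haL : a ≤ L) (hLU : L ≤ U)
    (hUb : U ≤ b) : ∫ p in a..b, (Icc L U).indicator h p = ∫ p in L..U, h p := by
  have hset : (Ioc a b ∩ Icc L U : Set ℝ) =ᵐ[volume] Icc L U := by
    have := (Ioc_ae_eq_Icc (a := a) (b := b) (μ := volume)).inter (ae_eq_refl (Icc L U))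
    rwa [inter_eq_right.mpr (Icc_subset_Icc haL hUb)] at this
  rw [intervalIntegral.integral_of_le (haL.trans (hLU.trans hUb)),
    setIntegral_indicator measurableSet_Icc, setIntegral_congr_set hset,
    integral_Icc_eq_integral_Ioc, ← intervalIntegral.integral_of_le hLU]

section Beta

variable {r s : ℝ}

theorem intervalIntegrable_betaKernel (hr : 0 < r) (hs : 0 < s) :
    IntervalIntegrable (fun t : ℝ => t ^ (r - 1) * (1 - t) ^ (s - 1)) volume 0 1 := by
  have h := Complex.betaIntegral_convergent (u := (r : ℂ)) (v := (s : ℂ)) (by simpa) (by simpa)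
  rw [intervalIntegrable_iff_integrableOn_Ioc_of_le zero_le_one] at h ⊢
  have hcast : ∀ᵐ t ∂(volume.restrict (Ioc (0:ℝ) 1)),
      (((t ^ (r - 1) * (1 - t) ^ (s - 1) : ℝ)) : ℂ)
        = (t : ℂ) ^ ((r : ℂ) - 1) * (1 - (t : ℂ)) ^ ((s : ℂ) - 1) := by
    filter_upwards [ae_restrict_mem measurableSet_Ioc] with t ht
    push_cast [Complex.ofReal_cpow ht.1.le, Complex.ofReal_cpow (sub_nonneg.mpr ht.2)]
    ring
  simpa [IntegrableOn] using (h.congr (Filter.EventuallyEq.symm hcast)).re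

theorem betaKernel_pos {t : ℝ} (ht : t ∈ Ioo 0 1) : 0 < t ^ (r - 1) * (1 - t) ^ (s - 1) :=
  mul_pos (Real.rpow_pos_of_pos ht.1 _) (Real.rpow_pos_of_pos (sub_pos.mpr ht.2) _)

theorem betaFun_pos (hr : 0 < r) (hs : 0 < s) : 0 < betaFun r s :=
  intervalIntegral.intervalIntegral_pos_of_pos_on (intervalIntegrable_betaKernel hr hs)
    (fun _ => betaKernel_pos) one_pos

theorem betaPDF_pos (hr : 0 < r) (hs : 0 < s) {t : ℝ} (ht : t ∈ Ioo 0 1) : 0 < betaPDF r s t :=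
  div_pos (betaKernel_pos ht) (betaFun_pos hr hs)

theorem betaPDF_nonneg (hr : 0 < r) (hs : 0 < s) {t : ℝ} (ht : t ∈ Icc 0 1) :
    0 ≤ betaPDF r s t :=
  div_nonneg (mul_nonneg (Real.rpow_nonneg ht.1 _) (Real.rpow_nonneg (sub_nonneg.mpr ht.2) _))
    (betaFun_pos hr hs).le

theorem intervalIntegrable_betaPDF (hr : 0 < r) (hs : 0 < s) :
    IntervalIntegrable (betaPDF r s) volume 0 1 :=
  (intervalIntegrable_betaKernel hr hs).div_const _

@[simp]
theorem betaCDF_zero : betaCDF r s 0 = 0 := intervalIntegral.integral_same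

theorem betaCDF_one (hr : 0 < r) (hs : 0 < s) : betaCDF r s 1 = 1 := by
  simp only [betaCDF, betaPDF]
  rw [intervalIntegral.integral_div]
  exact div_self (betaFun_pos hr hs).ne'

theorem betaCDF_strictMonoOn (hr : 0 < r) (hs : 0 < s) : StrictMonoOn (betaCDF r s) (Icc 0 1) :=
  strictMonoOn_primitive_of_pos (intervalIntegrable_betaPDF hr hs) fun _ => betaPDF_pos hr hs

theorem betaCDF_continuousOn (hr : 0 < r) (hs : 0 < s) : ContinuousOn (betaCDF r s) (Icc 0 1) := by
  unfold betaCDF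
  simpa [uIcc_of_le zero_le_one] using
    intervalIntegral.continuousOn_primitive_interval' (intervalIntegrable_betaPDF hr hs)
      left_mem_uIcc

theorem betaCDF_mem_Ioo (hr : 0 < r) (hs : 0 < s) {t : ℝ} (ht : t ∈ Ioo 0 1) :
    betaCDF r s t ∈ Ioo 0 1 := by
  have hF := betaCDF_strictMonoOn hr hs
  constructor
  · simpa using hF (left_mem_Icc.mpr zero_le_one) (Ioo_subset_Icc_self ht) ht.1
  · simpa [betaCDF_one hr hs] using
      hF (Ioo_subset_Icc_self ht) (right_mem_Icc.mpr zero_le_one) ht.2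

theorem betaQuantile_spec (hr : 0 < r) (hs : 0 < s) {q : ℝ} (hq : q ∈ Ioo 0 1) :
    betaQuantile r s q ∈ Ioo 0 1 ∧ betaCDF r s (betaQuantile r s q) = q := by
  have hex : ∃ t ∈ Ioo (0:ℝ) 1, betaCDF r s t = q := by
    have := intermediate_value_Ioo zero_le_one (betaCDF_continuousOn hr hs)
    rw [betaCDF_zero, betaCDF_one hr hs] at this
    exact this hq
  rw [betaQuantile, dif_pos hex]
  exact hex.choose_spec

theorem betaQuantile_mem_Ioo (hr : 0 < r) (hs : 0 < s) {q : ℝ} (hq : q ∈ Ioo 0 1) :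
    betaQuantile r s q ∈ Ioo 0 1 :=
  (betaQuantile_spec hr hs hq).1

theorem betaCDF_betaQuantile (hr : 0 < r) (hs : 0 < s) {q : ℝ} (hq : q ∈ Ioo 0 1) :
    betaCDF r s (betaQuantile r s q) = q :=
  (betaQuantile_spec hr hs hq).2

theorem lt_betaQuantile_iff (hr : 0 < r) (hs : 0 < s) {q p : ℝ} (hq : q ∈ Ioo 0 1)
    (hp : p ∈ Icc 0 1) : p < betaQuantile r s q ↔ betaCDF r s p < q := by
  conv_rhs => rw [← betaCDF_betaQuantile hr hs hq]
  exact ((betaCDF_strictMonoOn hr hs).lt_iff_lt hp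
    (Ioo_subset_Icc_self (betaQuantile_mem_Ioo hr hs hq))).symm

theorem betaQuantile_lt_iff (hr : 0 < r) (hs : 0 < s) {q p : ℝ} (hq : q ∈ Ioo 0 1)
    (hp : p ∈ Icc 0 1) : betaQuantile r s q < p ↔ q < betaCDF r s p := by
  conv_rhs => rw [← betaCDF_betaQuantile hr hs hq]
  exact ((betaCDF_strictMonoOn hr hs).lt_iff_lt
    (Ioo_subset_Icc_self (betaQuantile_mem_Ioo hr hs hq)) hp).symm

theorem betaQuantile_strictMonoOn (hr : 0 < r) (hs : 0 < s) :
    StrictMonoOn (betaQuantile r s) (Ioo 0 1) := fun _ ha b hb hab =>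
  (lt_betaQuantile_iff hr hs hb (Ioo_subset_Icc_self (betaQuantile_mem_Ioo hr hs ha))).mpr
    (by rwa [betaCDF_betaQuantile hr hs ha])

theorem betaQuantile_betaCDF (hr : 0 < r) (hs : 0 < s) {t : ℝ} (ht : t ∈ Ioo 0 1) :
    betaQuantile r s (betaCDF r s t) = t :=
  (betaCDF_strictMonoOn hr hs).injOn
    (Ioo_subset_Icc_self (betaQuantile_mem_Ioo hr hs (betaCDF_mem_Ioo hr hs ht)))
    (Ioo_subset_Icc_self ht) (betaCDF_betaQuantile hr hs (betaCDF_mem_Ioo hr hs ht))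

theorem betaQuantile_continuousOn (hr : 0 < r) (hs : 0 < s) :
    ContinuousOn (betaQuantile r s) (Ioo 0 1) := by
  have himage : Ioo 0 1 ⊆ betaQuantile r s '' Ioo 0 1 := fun t ht =>
    ⟨betaCDF r s t, betaCDF_mem_Ioo hr hs ht, betaQuantile_betaCDF hr hs ht⟩
  intro q hq
  refine ((betaQuantile_strictMonoOn hr hs).continuousAt_of_image_mem_nhds
    (isOpen_Ioo.mem_nhds hq) ?_).continuousWithinAt
  exact Filter.mem_of_superset (isOpen_Ioo.mem_nhds (betaQuantile_mem_Ioo hr hs hq)) himage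

end Beta

section Binomial

variable {n X : ℕ} {p : ℝ}

theorem binomPMF_nonneg (hp : p ∈ Icc 0 1) : 0 ≤ binomPMF n X p :=
  mul_nonneg (mul_nonneg (Nat.cast_nonneg _) (pow_nonneg hp.1 _))
    (pow_nonneg (sub_nonneg.mpr hp.2) _)

theorem binomPMF_pos (hX : X ≤ n) (hp : p ∈ Ioo 0 1) : 0 < binomPMF n X p :=
  mul_pos (mul_pos (Nat.cast_pos.mpr (Nat.choose_pos hX)) (pow_pos hp.1 _))
    (pow_pos (sub_pos.mpr hp.2) _)

theorem continuous_binomPMF (n X : ℕ) : Continuous (binomPMF n X) := by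
  unfold binomPMF
  fun_prop

theorem sum_binomPMF (n : ℕ) (p : ℝ) : ∑ X ∈ Finset.range (n + 1), binomPMF n X p = 1 :=
  calc ∑ X ∈ Finset.range (n + 1), binomPMF n X p
      = ∑ X ∈ Finset.range (n + 1), p ^ X * (1 - p) ^ (n - X) * n.choose X :=
        Finset.sum_congr rfl fun _ _ => by unfold binomPMF; ring
    _ = 1 := by rw [← add_pow, add_sub_cancel, one_pow]

theorem sum_range_binomPMF_add_sum_Icc (hX : X ≤ n + 1) (p : ℝ) :
    ∑ k ∈ Finset.range X, binomPMF n k p + ∑ k ∈ Finset.Icc X n, binomPMF n k p = 1 := by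
  rw [← Finset.Ico_add_one_right_eq_Icc, Finset.sum_range_add_sum_Ico _ hX, sum_binomPMF]

/-- `d/dp b(k;n,p) = ψ k - ψ (k+1)` with `ψ k = k C(n,k) p^(k-1) (1-p)^(n-k)`, so the
derivative of the upper tail telescopes. -/
theorem hasDerivAt_sum_Icc_binomPMF (hXn : X ≤ n) (p : ℝ) :
    HasDerivAt (fun q => ∑ k ∈ Finset.Icc X n, binomPMF n k q)
      (X * n.choose X * (p ^ (X - 1) * (1 - p) ^ (n - X))) p := by
  set ψ : ℕ → ℝ := fun k => k * n.choose k * (p ^ (k - 1) * (1 - p) ^ (n - k))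
  have hterm : ∀ k ∈ Finset.Icc X n, HasDerivAt (binomPMF n k) (ψ k - ψ (k + 1)) p := by
    intro k _
    have hpow : HasDerivAt (fun q : ℝ => (1 - q) ^ (n - k))
        ((n - k : ℕ) * (1 - p) ^ (n - k - 1) * -1) p :=
      ((hasDerivAt_id p).const_sub 1).fun_pow (n - k)
    have hchoose : ((k + 1 : ℕ) : ℝ) * n.choose (k + 1) = (n - k : ℕ) * n.choose k := by
      rw [mul_comm, mul_comm ((n - k : ℕ) : ℝ)]
      exact_mod_cast Nat.choose_succ_right_eq n k
    have hb : binomPMF n k = fun q => (n.choose k : ℝ) * (q ^ k * (1 - q) ^ (n - k)) := by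
      ext q
      unfold binomPMF
      ring
    rw [hb]
    refine (((hasDerivAt_pow k p).fun_mul hpow).const_mul _).congr_deriv ?_
    simp only [ψ, Nat.add_sub_cancel, show n - (k + 1) = n - k - 1 by omega]
    rw [hchoose]
    ring
  refine (HasDerivAt.fun_sum hterm).congr_deriv ?_
  rw [← Finset.Ico_add_one_right_eq_Icc, Finset.sum_Ico_eq_sub _ (by omega : X ≤ n + 1),
    Finset.sum_range_sub', Finset.sum_range_sub']
  simp [ψ, Nat.choose_succ_self]

theorem betaCDF_eq_sum_Icc_binomPMF (hX : 1 ≤ X) (hXn : X ≤ n) (p : ℝ) :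
    betaCDF X (n - X + 1) p = ∑ k ∈ Finset.Icc X n, binomPMF n k p := by
  set c : ℝ := X * n.choose X
  have hc : 0 < c := mul_pos (by exact_mod_cast hX) (by exact_mod_cast Nat.choose_pos hXn)
  have hkernel : ∀ t : ℝ, t ^ ((X : ℝ) - 1) * (1 - t) ^ ((n : ℝ) - X + 1 - 1)
      = t ^ (X - 1) * (1 - t) ^ (n - X) := fun t => by
    rw [← Real.rpow_natCast, ← Real.rpow_natCast, Nat.cast_sub hX, Nat.cast_sub hXn]
    norm_num
  have hprimitive : ∀ q : ℝ, ∫ t in (0:ℝ)..q, t ^ (X - 1) * (1 - t) ^ (n - X)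
      = (∑ k ∈ Finset.Icc X n, binomPMF n k q) / c := fun q => by
    rw [intervalIntegral.integral_eq_sub_of_hasDerivAt
      (f := fun q => (∑ k ∈ Finset.Icc X n, binomPMF n k q) / c)
      (fun t _ => ((hasDerivAt_sum_Icc_binomPMF hXn t).div_const c).congr_deriv
        (mul_div_cancel_left₀ _ hc.ne'))
      (Continuous.intervalIntegrable (by fun_prop) _ _)]
    have hzero : ∑ k ∈ Finset.Icc X n, binomPMF n k 0 = 0 :=
      Finset.sum_eq_zero fun k hk => by
        simp [binomPMF, zero_pow (by have := (Finset.mem_Icc.mp hk).1; omega : k ≠ 0)]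
    rw [hzero, zero_div, sub_zero]
  have hone : ∑ k ∈ Finset.Icc X n, binomPMF n k 1 = 1 := by
    have hlow : ∑ k ∈ Finset.range X, binomPMF n k 1 = 0 :=
      Finset.sum_eq_zero fun k hk => by
        simp [binomPMF, zero_pow (by have := Finset.mem_range.mp hk; omega : n - k ≠ 0)]
    linarith [sum_range_binomPMF_add_sum_Icc (n := n) (Nat.le_succ_of_le hXn) 1]
  have hbeta : betaFun X (n - X + 1) = 1 / c := by
    simp only [betaFun, hkernel, hprimitive, hone]
  simp only [betaCDF, betaPDF, hkernel, hbeta, intervalIntegral.integral_div, hprimitive]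
  field_simp

end Binomial

section ClopperPearson

variable {n X : ℕ} {α p : ℝ}

theorem half_mem_Ioo (hα : α ∈ Ioo 0 1) : α / 2 ∈ Ioo 0 1 :=
  ⟨by linarith [hα.1], by linarith [hα.2]⟩

theorem one_sub_half_mem_Ioo (hα : α ∈ Ioo 0 1) : 1 - α / 2 ∈ Ioo 0 1 :=
  ⟨by linarith [hα.2], by linarith [hα.1]⟩

theorem cpLower_params_pos (hX : X ≠ 0) (hXn : X ≤ n) : 0 < (X : ℝ) ∧ 0 < (n : ℝ) - X + 1 := by
  have : (X : ℝ) ≤ n := by exact_mod_cast hXn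
  exact ⟨by positivity, by linarith⟩

theorem cpUpper_params_pos (hXn : X < n) : 0 < (X : ℝ) + 1 ∧ 0 < (n : ℝ) - X := by
  have : (X : ℝ) < n := by exact_mod_cast hXn
  exact ⟨by positivity, by linarith⟩

theorem cpLower_mem_Icc (hXn : X ≤ n) (hα : α ∈ Ioo 0 1) : cpLower n X α ∈ Icc 0 1 := by
  unfold cpLower
  split_ifs with hX
  · exact left_mem_Icc.mpr zero_le_one
  · obtain ⟨hr, hs⟩ := cpLower_params_pos hX hXn
    exact Ioo_subset_Icc_self (betaQuantile_mem_Ioo hr hs (half_mem_Ioo hα))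

theorem cpUpper_mem_Icc (hXn : X ≤ n) (hα : α ∈ Ioo 0 1) : cpUpper n X α ∈ Icc 0 1 := by
  unfold cpUpper
  split_ifs with hX
  · exact right_mem_Icc.mpr zero_le_one
  · obtain ⟨hr, hs⟩ := cpUpper_params_pos (lt_of_le_of_ne hXn hX)
    exact Ioo_subset_Icc_self (betaQuantile_mem_Ioo hr hs (one_sub_half_mem_Ioo hα))

theorem lt_cpLower_iff (hX : X ≠ 0) (hXn : X ≤ n) (hα : α ∈ Ioo 0 1) (hp : p ∈ Icc 0 1) :
    p < cpLower n X α ↔ ∑ k ∈ Finset.Icc X n, binomPMF n k p < α / 2 := by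
  obtain ⟨hr, hs⟩ := cpLower_params_pos hX hXn
  rw [cpLower, if_neg hX, lt_betaQuantile_iff hr hs (half_mem_Ioo hα) hp,
    betaCDF_eq_sum_Icc_binomPMF (Nat.one_le_iff_ne_zero.mpr hX) hXn]

theorem cpUpper_lt_iff (hXn : X < n) (hα : α ∈ Ioo 0 1) (hp : p ∈ Icc 0 1) :
    cpUpper n X α < p ↔ ∑ k ∈ Finset.range (X + 1), binomPMF n k p < α / 2 := by
  obtain ⟨hr, hs⟩ := cpUpper_params_pos hXn
  have htail := betaCDF_eq_sum_Icc_binomPMF (n := n) (X := X + 1) le_add_self hXn p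
  rw [Nat.cast_add_one, show (n : ℝ) - (X + 1) + 1 = n - X by ring] at htail
  rw [cpUpper, if_neg hXn.ne, betaQuantile_lt_iff hr hs (one_sub_half_mem_Ioo hα) hp, htail]
  constructor <;> intro h <;>
    linarith [sum_range_binomPMF_add_sum_Icc (n := n) (X := X + 1) (by omega) p]

theorem cpLower_le_cpUpper (hXn : X ≤ n) (hα : α ∈ Ioo 0 1) : cpLower n X α ≤ cpUpper n X α := by
  rcases eq_or_ne X 0 with rfl | hX
  · simpa [cpLower] using (cpUpper_mem_Icc hXn hα).1
  rcases eq_or_lt_of_le hXn with rfl | hXn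
  · simpa [cpUpper] using (cpLower_mem_Icc le_rfl hα).2
  have hL := cpLower_mem_Icc hXn.le hα
  have htail : ∑ k ∈ Finset.Icc X n, binomPMF n k (cpLower n X α) = α / 2 := by
    obtain ⟨hr, hs⟩ := cpLower_params_pos hX hXn.le
    rw [← betaCDF_eq_sum_Icc_binomPMF (Nat.one_le_iff_ne_zero.mpr hX) hXn.le, cpLower, if_neg hX]
    exact betaCDF_betaQuantile hr hs (half_mem_Ioo hα)
  by_contra! hUL
  have hlow := (cpUpper_lt_iff hXn hα hL).mp hUL
  rw [Finset.sum_range_succ] at hlow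
  linarith [sum_range_binomPMF_add_sum_Icc (n := n) (X := X) (by omega) (cpLower n X α),
    binomPMF_nonneg (n := n) (X := X) hL, hα.2]

theorem cpLower_strictMonoOn (hX : X ≠ 0) (hXn : X ≤ n) : StrictMonoOn (cpLower n X) (Ioo 0 1) := by
  intro α₁ h₁ α₂ h₂ h12
  obtain ⟨hr, hs⟩ := cpLower_params_pos hX hXn
  simp only [cpLower, if_neg hX]
  exact betaQuantile_strictMonoOn hr hs (half_mem_Ioo h₁) (half_mem_Ioo h₂) (by linarith)

theorem cpLower_monotoneOn (hXn : X ≤ n) : MonotoneOn (cpLower n X) (Ioo 0 1) := by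
  rcases eq_or_ne X 0 with rfl | hX
  · intro _ _ _ _ _
    simp [cpLower]
  · exact (cpLower_strictMonoOn hX hXn).monotoneOn

theorem cpUpper_antitoneOn (hXn : X ≤ n) : AntitoneOn (cpUpper n X) (Ioo 0 1) := by
  intro α₁ h₁ α₂ h₂ h12
  rcases eq_or_lt_of_le hXn with rfl | hXn
  · simp [cpUpper]
  obtain ⟨hr, hs⟩ := cpUpper_params_pos hXn
  simp only [cpUpper, if_neg hXn.ne]
  exact (betaQuantile_strictMonoOn hr hs).monotoneOn (one_sub_half_mem_Ioo h₂)
    (one_sub_half_mem_Ioo h₁) (by linarith)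

theorem cpLower_continuousOn (hXn : X ≤ n) : ContinuousOn (cpLower n X) (Ioo 0 1) := by
  show ContinuousOn (fun α => cpLower n X α) _
  rcases eq_or_ne X 0 with rfl | hX
  · simp [cpLower, continuousOn_const]
  obtain ⟨hr, hs⟩ := cpLower_params_pos hX hXn
  simp only [cpLower, if_neg hX]
  exact (betaQuantile_continuousOn hr hs).comp (by fun_prop) fun _ => half_mem_Ioo

theorem cpUpper_continuousOn (hXn : X ≤ n) : ContinuousOn (cpUpper n X) (Ioo 0 1) := by
  show ContinuousOn (fun α => cpUpper n X α) _
  rcases eq_or_lt_of_le hXn with rfl | hXn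
  · simp [cpUpper, continuousOn_const]
  obtain ⟨hr, hs⟩ := cpUpper_params_pos hXn
  simp only [cpUpper, if_neg hXn.ne]
  exact (betaQuantile_continuousOn hr hs).comp (by fun_prop) fun _ => one_sub_half_mem_Ioo

end ClopperPearson

noncomputable def coverageProb (n : ℕ) (α p : ℝ) : ℝ :=
  ∑ X ∈ Finset.range (n + 1),
    (if cpLower n X α ≤ p ∧ p ≤ cpUpper n X α then binomPMF n X p else 0)

section Coverage

variable {n : ℕ} {α p : ℝ}

theorem sum_binomPMF_filter_lt_cpLower_le (hα : α ∈ Ioo 0 1) (hp : p ∈ Icc 0 1) :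
    ∑ X ∈ (Finset.range (n + 1)).filter (fun X => p < cpLower n X α), binomPMF n X p
      ≤ α / 2 := by
  set S := (Finset.range (n + 1)).filter (fun X => p < cpLower n X α)
  rcases S.eq_empty_or_nonempty with hS | hS
  · simpa [hS] using (half_pos hα.1).le
  obtain ⟨hX₀mem, hpX₀⟩ := Finset.mem_filter.mp (S.min'_mem hS)
  have hX₀n : S.min' hS ≤ n := Nat.lt_succ_iff.mp (Finset.mem_range.mp hX₀mem)
  have hX₀ : S.min' hS ≠ 0 := by
    rintro h
    simp [h, cpLower, not_lt.mpr hp.1] at hpX₀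
  have hsub : S ⊆ Finset.Icc (S.min' hS) n := fun X hX =>
    Finset.mem_Icc.mpr ⟨S.min'_le X hX,
      Nat.lt_succ_iff.mp (Finset.mem_range.mp (Finset.mem_filter.mp hX).1)⟩
  calc ∑ X ∈ S, binomPMF n X p
      ≤ ∑ k ∈ Finset.Icc (S.min' hS) n, binomPMF n k p :=
        Finset.sum_le_sum_of_subset_of_nonneg hsub fun _ _ _ => binomPMF_nonneg hp
    _ ≤ α / 2 := ((lt_cpLower_iff hX₀ hX₀n hα hp).mp hpX₀).le

theorem sum_binomPMF_filter_cpUpper_lt_le (hα : α ∈ Ioo 0 1) (hp : p ∈ Icc 0 1) :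
    ∑ X ∈ (Finset.range (n + 1)).filter (fun X => cpUpper n X α < p), binomPMF n X p
      ≤ α / 2 := by
  set S := (Finset.range (n + 1)).filter (fun X => cpUpper n X α < p)
  rcases S.eq_empty_or_nonempty with hS | hS
  · simpa [hS] using (half_pos hα.1).le
  obtain ⟨hX₁mem, hX₁p⟩ := Finset.mem_filter.mp (S.max'_mem hS)
  have hX₁n : S.max' hS < n := by
    refine lt_of_le_of_ne (Nat.lt_succ_iff.mp (Finset.mem_range.mp hX₁mem)) fun h => ?_
    simp [h, cpUpper, not_lt.mpr hp.2] at hX₁p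
  have hsub : S ⊆ Finset.range (S.max' hS + 1) := fun X hX =>
    Finset.mem_range.mpr (Nat.lt_succ_of_le (S.le_max' X hX))
  calc ∑ X ∈ S, binomPMF n X p
      ≤ ∑ k ∈ Finset.range (S.max' hS + 1), binomPMF n k p :=
        Finset.sum_le_sum_of_subset_of_nonneg hsub fun _ _ _ => binomPMF_nonneg hp
    _ ≤ α / 2 := ((cpUpper_lt_iff hX₁n hα hp).mp hX₁p).le

theorem one_sub_le_coverageProb (hα : α ∈ Ioo 0 1) (hp : p ∈ Icc 0 1) :
    1 - α ≤ coverageProb n α p := by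
  have hsplit : ∀ X ∈ Finset.range (n + 1), binomPMF n X p
      ≤ (if cpLower n X α ≤ p ∧ p ≤ cpUpper n X α then binomPMF n X p else 0)
        + (if p < cpLower n X α then binomPMF n X p else 0)
        + (if cpUpper n X α < p then binomPMF n X p else 0) := by
    intro X _
    have := binomPMF_nonneg (n := n) (X := X) hp
    by_cases hc : cpLower n X α ≤ p ∧ p ≤ cpUpper n X α
    · rw [if_pos hc]
      split_ifs <;> linarith
    · rw [if_neg hc]
      rcases not_and_or.mp hc with h | h
      · rw [if_pos (not_le.mp h)]
        split_ifs <;> linarith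
      · rw [if_pos (not_le.mp h)]
        split_ifs <;> linarith
  have hcover := Finset.sum_le_sum hsplit
  rw [sum_binomPMF, Finset.sum_add_distrib, Finset.sum_add_distrib] at hcover
  have hL := sum_binomPMF_filter_lt_cpLower_le (n := n) hα hp
  have hU := sum_binomPMF_filter_cpUpper_lt_le (n := n) hα hp
  rw [Finset.sum_filter] at hL hU
  unfold coverageProb
  linarith

end Coverage

noncomputable def binomBetaCDF (n X : ℕ) (r s x : ℝ) : ℝ :=
  ∫ p in (0:ℝ)..x, binomPMF n X p * betaPDF r s p

section MeanCoverage

variable {n : ℕ} {r s α : ℝ}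

theorem intervalIntegrable_binomPMF_mul_betaPDF (hr : 0 < r) (hs : 0 < s) (X : ℕ) :
    IntervalIntegrable (fun p => binomPMF n X p * betaPDF r s p) volume 0 1 :=
  (intervalIntegrable_betaPDF hr hs).continuousOn_mul (continuous_binomPMF n X).continuousOn

theorem binomBetaCDF_strictMonoOn (hr : 0 < r) (hs : 0 < s) {X : ℕ} (hXn : X ≤ n) :
    StrictMonoOn (binomBetaCDF n X r s) (Icc 0 1) :=
  strictMonoOn_primitive_of_pos (intervalIntegrable_binomPMF_mul_betaPDF hr hs X)
    fun _ hp => mul_pos (binomPMF_pos hXn hp) (betaPDF_pos hr hs hp)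

theorem binomBetaCDF_continuousOn (hr : 0 < r) (hs : 0 < s) (X : ℕ) :
    ContinuousOn (binomBetaCDF n X r s) (Icc 0 1) := by
  unfold binomBetaCDF
  simpa [uIcc_of_le zero_le_one] using
    intervalIntegral.continuousOn_primitive_interval'
      (intervalIntegrable_binomPMF_mul_betaPDF hr hs X) left_mem_uIcc

theorem coverageTerm_eq_indicator (n X : ℕ) (r s L U p : ℝ) :
    (if L ≤ p ∧ p ≤ U then binomPMF n X p else 0) * betaPDF r s p
      = (Icc L U).indicator (fun p => binomPMF n X p * betaPDF r s p) p := by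
  by_cases h : L ≤ p ∧ p ≤ U <;> simp [indicator, h]

theorem meanCoverage_eq_sum (hr : 0 < r) (hs : 0 < s) (hα : α ∈ Ioo 0 1) :
    meanCoverage α n r s = ∑ X ∈ Finset.range (n + 1),
      (binomBetaCDF n X r s (cpUpper n X α) - binomBetaCDF n X r s (cpLower n X α)) := by
  simp only [meanCoverage, Finset.sum_mul, coverageTerm_eq_indicator]
  rw [intervalIntegral.integral_finsetSum fun X _ =>
    (intervalIntegrable_binomPMF_mul_betaPDF hr hs X).indicator measurableSet_Icc]
  refine Finset.sum_congr rfl fun X hX => ?_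
  have hXn : X ≤ n := Nat.lt_succ_iff.mp (Finset.mem_range.mp hX)
  have hL := cpLower_mem_Icc hXn hα
  have hU := cpUpper_mem_Icc hXn hα
  have hint := intervalIntegrable_binomPMF_mul_betaPDF (n := n) hr hs X
  rw [intervalIntegral.integral_indicator_Icc hL.1 (cpLower_le_cpUpper hXn hα) hU.2, binomBetaCDF,
    binomBetaCDF, intervalIntegral.integral_interval_sub_left]
  · exact hint.mono_set (uIcc_subset_uIcc left_mem_uIcc (Icc_subset_uIcc hU))
  · exact hint.mono_set (uIcc_subset_uIcc left_mem_uIcc (Icc_subset_uIcc hL))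

theorem meanCoverage_continuousOn (hr : 0 < r) (hs : 0 < s) :
    ContinuousOn (fun α => meanCoverage α n r s) (Ioo 0 1) := by
  refine ContinuousOn.congr (continuousOn_finsetSum _ fun X hX => ?_)
    fun α hα => meanCoverage_eq_sum hr hs hα
  have hXn : X ≤ n := Nat.lt_succ_iff.mp (Finset.mem_range.mp hX)
  have hG := binomBetaCDF_continuousOn (n := n) hr hs X
  exact (hG.comp (cpUpper_continuousOn hXn) fun _ => cpUpper_mem_Icc hXn).sub
    (hG.comp (cpLower_continuousOn hXn) fun _ => cpLower_mem_Icc hXn)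

theorem meanCoverage_strictAntiOn (hn : 1 ≤ n) (hr : 0 < r) (hs : 0 < s) :
    StrictAntiOn (fun α => meanCoverage α n r s) (Ioo 0 1) := by
  intro α₁ h₁ α₂ h₂ h12
  simp only [meanCoverage_eq_sum hr hs h₁, meanCoverage_eq_sum hr hs h₂]
  refine Finset.sum_lt_sum (fun X hX => ?_) ⟨n, Finset.self_mem_range_succ n, ?_⟩
  · have hXn : X ≤ n := Nat.lt_succ_iff.mp (Finset.mem_range.mp hX)
    have hG := (binomBetaCDF_strictMonoOn hr hs hXn).monotoneOn
    exact sub_le_sub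
      (hG (cpUpper_mem_Icc hXn h₂) (cpUpper_mem_Icc hXn h₁) (cpUpper_antitoneOn hXn h₁ h₂ h12.le))
      (hG (cpLower_mem_Icc hXn h₁) (cpLower_mem_Icc hXn h₂) (cpLower_monotoneOn hXn h₁ h₂ h12.le))
  · simp only [cpUpper]
    exact sub_lt_sub_left ((binomBetaCDF_strictMonoOn hr hs le_rfl)
      (cpLower_mem_Icc le_rfl h₁) (cpLower_mem_Icc le_rfl h₂)
      (cpLower_strictMonoOn (by omega) le_rfl h₁ h₂ h12)) _

theorem one_sub_le_meanCoverage (hr : 0 < r) (hs : 0 < s) (hα : α ∈ Ioo 0 1) :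
    1 - α ≤ meanCoverage α n r s := by
  have hint : IntervalIntegrable (fun p => coverageProb n α p * betaPDF r s p) volume 0 1 := by
    simp only [coverageProb, Finset.sum_mul, coverageTerm_eq_indicator]
    simpa only [Finset.sum_fn] using IntervalIntegrable.sum (Finset.range (n + 1)) fun X _ =>
      (intervalIntegrable_binomPMF_mul_betaPDF hr hs X).indicator
        (measurableSet_Icc (a := cpLower n X α) (b := cpUpper n X α))
  calc 1 - α = ∫ p in (0:ℝ)..1, (1 - α) * betaPDF r s p := by
        rw [intervalIntegral.integral_const_mul, ← betaCDF, betaCDF_one hr hs, mul_one]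
    _ ≤ ∫ p in (0:ℝ)..1, coverageProb n α p * betaPDF r s p :=
        intervalIntegral.integral_mono_on zero_le_one
          ((intervalIntegrable_betaPDF hr hs).const_mul _) hint fun p hp =>
            mul_le_mul_of_nonneg_right (one_sub_le_coverageProb hα hp) (betaPDF_nonneg hr hs hp)
    _ = meanCoverage α n r s := rfl

end MeanCoverage

/-- Existence and uniqueness of the adjusted level `α'`: if `C(α_U,n,r,s) ≤ 1 - α` for some
`α_U ∈ (α,1)`, then there is a unique `α' ∈ [α, α_U]` with `C(α',n,r,s) = 1 - α`. -/
theorem adjusted_level_existsUnique (n : ℕ) (hn : 1 ≤ n) (r s : ℝ) (hr : 0 < r) (hs : 0 < s)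
    (α : ℝ) (hα : α ∈ Set.Ioo (0:ℝ) 1) (αU : ℝ) (hαU : αU ∈ Set.Ioo α 1)
    (hC : meanCoverage αU n r s ≤ 1 - α) :
    ∃! α' : ℝ, α' ∈ Set.Icc α αU ∧ meanCoverage α' n r s = 1 - α := by
  have hsub : Icc α αU ⊆ Ioo 0 1 := Icc_subset_Ioo hα.1 hαU.2
  obtain ⟨α', hα', hval⟩ := intermediate_value_Icc' hαU.1.le
    ((meanCoverage_continuousOn hr hs).mono hsub) ⟨hC, one_sub_le_meanCoverage hr hs hα⟩
  exact ⟨α', ⟨hα', hval⟩, fun β ⟨hβ, hβval⟩ =>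
    ((meanCoverage_strictAntiOn hn hr hs).mono hsub).injOn hβ hα' (hβval.trans hval.symm)⟩
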